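/- Let u_1, ..., u_d be unit vectors spanning R² and ν_1,...,ν_d > 0 with ∑ ν_i u_i = 0. If two convex polygons P and Q in R² both have outward facet unit normals exactly u_1,...,u_d with corresponding edge lengths ν_1,...,ν_d, then Q is a translate of P. -/

import Mathlib

/-!
Let `J` be the rotation by a right angle. The edge of a polygon `B` with outer unit normal `w`
is a segment `[a w, a w + ℓ w • J w]` of length `ℓ w`, and `B` is the intersection of the
half-planes `⟪x, w⟫ ≤ ⟪a w, w⟫`. The end point `a w + ℓ w • J w` of that edge is the start point
of the edge whose normal comes next after `w` in counterclockwise order among all the normals.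
So for two polygons `P` and `Q` with the same normals and lengths, `aQ w - aP w` does not change
when `w` is replaced by the next normal; walking around the circle of normals shows that it is a
constant vector `v`, hence the half-plane descriptions of `Q` and `P + v` coincide.
-/

open scoped RealInnerProductSpace
open MeasureTheory Set Filter Topology

section Support

variable {E : Type*} [NormedAddCommGroup E] [InnerProductSpace ℝ E]

noncomputable def supportValue (B : Set E) (u : E) : ℝ := sSup ((fun y => ⟪y, u⟫) '' B)

def supportFace (B : Set E) (u : E) : Set E := {x ∈ B | ⟪x, u⟫ = supportValue B u}

variable {B : Set E} {u x : E}

lemma inner_le_supportValue (hB : IsCompact B) (hx : x ∈ B) : ⟪x, u⟫ ≤ supportValue B u :=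
  le_csSup (hB.image (continuous_id.inner continuous_const)).bddAbove (mem_image_of_mem _ hx)

lemma mem_supportFace_of_forall_inner_le (hx : x ∈ B) (h : ∀ y ∈ B, ⟪y, u⟫ ≤ ⟪x, u⟫) :
    x ∈ supportFace B u :=
  ⟨hx, (IsGreatest.csSup_eq ⟨mem_image_of_mem _ hx, by rintro _ ⟨y, hy, rfl⟩; exact h y hy⟩).symm⟩

lemma supportFace_nonempty (hB : IsCompact B) (hne : B.Nonempty) : (supportFace B u).Nonempty :=
  let ⟨x, hx, hmax⟩ := hB.exists_isMaxOn hne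
    (continuous_id.inner continuous_const : Continuous fun y : E => ⟪y, u⟫).continuousOn
  ⟨x, mem_supportFace_of_forall_inner_le hx fun _ hy => hmax hy⟩

lemma isCompact_supportFace (hB : IsCompact B) : IsCompact (supportFace B u) :=
  hB.inter_right (isClosed_eq (continuous_id.inner continuous_const) continuous_const)

lemma convex_supportFace (hB : Convex ℝ B) : Convex ℝ (supportFace B u) :=
  hB.inter (convex_hyperplane ⟨fun _ _ => inner_add_left _ _ _,
    fun _ _ => real_inner_smul_left _ _ _⟩ _)

lemma inner_lt_supportValue_of_mem_interior (hB : IsCompact B) (hu : u ≠ 0)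
    (hx : x ∈ interior B) : ⟪x, u⟫ < supportValue B u := by
  have hev : ∀ᶠ t : ℝ in 𝓝[>] 0, x + t • u ∈ B :=
    (((continuous_const.add (continuous_id.smul continuous_const)).tendsto' 0 x
      (by simp)).eventually (mem_interior_iff_mem_nhds.1 hx)).filter_mono nhdsWithin_le_nhds
  obtain ⟨t, ht, htpos⟩ := (hev.and self_mem_nhdsWithin).exists
  have := inner_le_supportValue (u := u) hB ht
  rw [inner_add_left, real_inner_smul_left, real_inner_self_eq_norm_sq] at this
  have : 0 < t * ‖u‖ ^ 2 := by positivity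
  linarith

lemma mem_of_forall_inner_le_supportValue {S : Set E} (hB : IsCompact B) {p : E}
    (hp : p ∈ interior B) (hS : ∀ w ∈ S, w ≠ 0)
    (hbd : frontier B ⊆ ⋃ w ∈ S, supportFace B w) (hx : ∀ w ∈ S, ⟪x, w⟫ ≤ supportValue B w) :
    x ∈ B := by
  by_contra hxB
  obtain ⟨y, hyseg, hy⟩ : ∃ y ∈ segment ℝ p x, y ∈ frontier B := by
    by_contra! hnot
    have hcover : segment ℝ p x ⊆ interior B ∪ Bᶜ := fun y hy => by
      by_contra hy'
      simp only [mem_union, mem_compl_iff, not_or, not_not] at hy'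
      exact hnot y hy (hB.isClosed.frontier_eq ▸ ⟨hy'.2, hy'.1⟩)
    rcases (convex_segment p x).isPreconnected.subset_or_subset isOpen_interior
      hB.isClosed.isOpen_compl (disjoint_compl_right.mono_left interior_subset) hcover
      with h | h
    · exact hxB (interior_subset (h (right_mem_segment ℝ p x)))
    · exact h (left_mem_segment ℝ p x) (interior_subset hp)
  obtain ⟨w, hw, hyw⟩ := mem_iUnion₂.1 (hbd hy)
  obtain ⟨a, b, ha, hb, hab, rfl⟩ := hyseg
  have hpw := inner_lt_supportValue_of_mem_interior hB (hS w hw) hp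
  have hxw := hx w hw
  have hyw' := hyw.2
  rw [inner_add_left, real_inner_smul_left, real_inner_smul_left] at hyw'
  obtain rfl : a = 0 := by
    by_contra ha₀
    have : a * (supportValue B w - ⟪p, w⟫) + b * (supportValue B w - ⟪x, w⟫) = 0 := by
      linear_combination supportValue B w * hab - hyw'
    nlinarith [mul_pos (ha.lt_of_ne (Ne.symm ha₀)) (sub_pos.2 hpw),
      mul_nonneg hb (sub_nonneg.2 hxw)]
  obtain rfl : b = 1 := by linarith
  exact hxB (by simpa using hyw.1)

end Support

section OrientedPlane

open Real

variable {E : Type*} [NormedAddCommGroup E] [InnerProductSpace ℝ E]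
  [Fact (Module.finrank ℝ E = 2)] (o : Orientation ℝ E (Fin 2))

local notation "J" => o.rightAngleRotation
local notation "ω" => o.areaForm

namespace Orientation

lemma eq_inner_smul_add_areaForm_smul {u : E} (hu : ‖u‖ = 1) (x : E) :
    x = ⟪u, x⟫ • u + ω u x • J u := by
  refine ext_inner_right ℝ fun y => ?_
  have := o.inner_mul_inner_add_areaForm_mul_areaForm u x y
  rw [hu] at this
  simp only [inner_add_left, real_inner_smul_left, inner_rightAngleRotation_left]
  linarith

lemma eq_or_eq_neg_of_areaForm_eq_zero {u w : E} (hu : ‖u‖ = 1) (hw : ‖w‖ = 1)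
    (h : ω u w = 0) : w = u ∨ w = -u := by
  have hsq := o.inner_sq_add_areaForm_sq u w
  rw [h, hu, hw] at hsq
  have hw' := o.eq_inner_smul_add_areaForm_smul hu w
  rw [h, zero_smul, add_zero] at hw'
  rcases sq_eq_one_iff.1 (by linarith : ⟪u, w⟫ ^ 2 = 1) with h1 | h1
  · left; rw [hw', h1, one_smul]
  · right; rw [hw', h1, neg_one_smul]

lemma areaForm_smul_eq_add {u : E} (hu : ‖u‖ = 1) (y z : E) :
    ω u y • z = ω z y • u + ω u z • y := by
  have hz := o.eq_inner_smul_add_areaForm_smul hu z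
  have hy := o.eq_inner_smul_add_areaForm_smul hu y
  have hzy := o.inner_mul_areaForm_sub u z y
  rw [hu, one_pow, one_mul] at hzy
  rw [← hzy]
  linear_combination (norm := module) ω u y • hz - ω u z • hy

lemma areaForm_eq_sin_oangle {x y : E} (hx : ‖x‖ = 1) (hy : ‖y‖ = 1) :
    ω x y = Real.Angle.sin (o.oangle x y) := by
  rw [oangle, Real.Angle.sin_coe, Complex.sin_arg, o.norm_kahler, hx, hy, o.kahler_apply_apply]
  simp

lemma exists_supportFace_eq_image_Icc [MeasurableSpace E] [BorelSpace E] {B : Set E}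
    (hB : IsCompact B) (hconv : Convex ℝ B) (hne : B.Nonempty) {u : E} (hu : ‖u‖ = 1) :
    ∃ a : E, supportFace B u =
      (fun s : ℝ => a + s • J u) '' Icc 0 (μH[1] (supportFace B u)).toReal := by
  set F := supportFace B u
  set φ : ℝ → E := fun s => supportValue B u • u + s • J u with hφ
  have hiso : Isometry φ := Isometry.of_dist_eq fun s t => by
    rw [dist_eq_norm, dist_eq_norm, hφ, add_sub_add_left_eq_sub, ← sub_smul, norm_smul,
      LinearIsometryEquiv.norm_map, hu, mul_one, Real.norm_eq_abs]
  have hFφ : F ⊆ range φ := fun x hx => ⟨ω u x, by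
    rw [hφ, ← hx.2, real_inner_comm]; exact (o.eq_inner_smul_add_areaForm_smul hu x).symm⟩
  set K := φ ⁻¹' F
  have hK : IsCompact K := hiso.isClosedEmbedding.isCompact_preimage (isCompact_supportFace hB)
  have hKne : K.Nonempty :=
    let ⟨x, hx⟩ := supportFace_nonempty hB hne (u := u)
    let ⟨s, hs⟩ := hFφ hx
    ⟨s, show φ s ∈ F from hs ▸ hx⟩
  have hKconv : Convex ℝ K := fun s hs t ht a b ha hb hab => by
    have : φ (a • s + b • t) = a • φ s + b • φ t := by
      simp only [hφ]
      linear_combination (norm := module) (-hab) • (supportValue B u • u)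
    exact (show φ (a • s + b • t) ∈ F from this ▸ convex_supportFace hconv hs ht ha hb hab)
  set s := sInf K
  set t := sSup K
  have hst : s ≤ t := csInf_le_csSup hKne hK.bddBelow hK.bddAbove
  have hKIcc : K = Icc s t := eq_Icc_of_connected_compact ⟨hKne, hKconv.isPreconnected⟩ hK
  have hFK : F = φ '' Icc s t := by rw [← hKIcc, image_preimage_eq_of_subset hFφ]
  have hμ : μH[1] F = ENNReal.ofReal (t - s) := by
    rw [hFK, hiso.hausdorffMeasure_image (Or.inl zero_le_one), hausdorffMeasure_real,
      Real.volume_Icc]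
  refine ⟨φ s, ?_⟩
  rw [hμ, ENNReal.toReal_ofReal (sub_nonneg.2 hst), ← sub_self s, ← image_sub_const_Icc,
    image_image, hFK]
  refine image_congr fun r _ => ?_
  simp only [hφ, sub_smul]
  abel

structure IsPolygon (B S : Set E) (a : E → E) (ℓ : E → ℝ) : Prop where
  isCompact : IsCompact B
  interior_nonempty : (interior B).Nonempty
  finite : S.Finite
  norm_eq_one : ∀ w ∈ S, ‖w‖ = 1
  frontier_subset : frontier B ⊆ ⋃ w ∈ S, supportFace B w
  supportFace_eq : ∀ w ∈ S, supportFace B w = (fun s : ℝ => a w + s • J w) '' Icc 0 (ℓ w)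
  length_pos : ∀ w ∈ S, 0 < ℓ w

lemma exists_isPolygon [MeasurableSpace E] [BorelSpace E] {B S : Set E} {ℓ : E → ℝ}
    (hB : IsCompact B) (hconv : Convex ℝ B) (hint : (interior B).Nonempty) (hS : S.Finite)
    (hunit : ∀ w ∈ S, ‖w‖ = 1) (hbd : frontier B ⊆ ⋃ w ∈ S, supportFace B w)
    (hlen : ∀ w ∈ S, μH[1] (supportFace B w) = ENNReal.ofReal (ℓ w))
    (hℓ : ∀ w ∈ S, 0 < ℓ w) :
    ∃ a, o.IsPolygon B S a ℓ := by
  have hface : ∀ w ∈ S, ∃ a : E,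
      supportFace B w = (fun s : ℝ => a + s • J w) '' Icc 0 (ℓ w) := fun w hw => by
    simpa [hlen w hw, (hℓ w hw).le] using
      o.exists_supportFace_eq_image_Icc hB hconv (hint.mono interior_subset) (hunit w hw)
  choose! a ha using hface
  exact ⟨a, hB, hint, hS, hunit, hbd, ha, hℓ⟩

noncomputable def ccwAngle (x y : E) : ℝ := toIcoMod two_pi_pos 0 (o.oangle x y).toReal

lemma ccwAngle_mem_Ico (x y : E) : o.ccwAngle x y ∈ Ico 0 (2 * π) := by
  simpa [ccwAngle] using toIcoMod_mem_Ico two_pi_pos 0 (o.oangle x y).toReal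

lemma coe_ccwAngle (x y : E) : (o.ccwAngle x y : Angle) = o.oangle x y := by
  rw [ccwAngle, Angle.coe_toIcoMod, Angle.coe_toReal]

lemma ccwAngle_pos {x y : E} (hx : ‖x‖ = 1) (hy : ‖y‖ = 1) (hxy : x ≠ y) :
    0 < o.ccwAngle x y := by
  refine (o.ccwAngle_mem_Ico x y).1.lt_of_ne fun h => hxy ?_
  refine (o.eq_iff_norm_eq_and_oangle_eq_zero x y).2 ⟨hx.trans hy.symm, ?_⟩
  rw [← coe_ccwAngle, ← h, Angle.coe_zero]

lemma areaForm_pos_iff {x y : E} (hx : ‖x‖ = 1) (hy : ‖y‖ = 1) :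
    0 < ω x y ↔ 0 < o.ccwAngle x y ∧ o.ccwAngle x y < π := by
  obtain ⟨h0, h2π⟩ := o.ccwAngle_mem_Ico x y
  rw [o.areaForm_eq_sin_oangle hx hy, ← coe_ccwAngle, Angle.sin_coe]
  refine ⟨fun hsin => ⟨h0.lt_of_ne ?_, lt_of_not_ge fun hπ => ?_⟩,
    fun h => sin_pos_of_pos_of_lt_pi h.1 h.2⟩
  · rintro h
    rw [← h, sin_zero] at hsin
    exact hsin.false
  · have := sin_nonpos_of_nonpos_of_neg_pi_le (x := o.ccwAngle x y - 2 * π) (by linarith)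
      (by linarith)
    rw [sin_sub_two_pi] at this
    linarith

lemma ccwAngle_eq_add_or_eq_add_sub_two_pi {x y z : E} (hx : x ≠ 0) (hy : y ≠ 0) (hz : z ≠ 0) :
    o.ccwAngle x z = o.ccwAngle x y + o.ccwAngle y z ∨
      o.ccwAngle x z = o.ccwAngle x y + o.ccwAngle y z - 2 * π := by
  have : Fact (0 < 2 * π) := ⟨two_pi_pos⟩
  have hinj {a b : ℝ} (ha : a ∈ Ico 0 (2 * π)) (hb : b ∈ Ico 0 (2 * π))
      (h : (a : Angle) = b) : a = b :=
    (AddCircle.coe_eq_coe_iff_of_mem_Ico (a := 0) (by simpa using ha) (by simpa using hb)).1 h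
  have hcoe : (o.ccwAngle x z : Angle) = (o.ccwAngle x y + o.ccwAngle y z : ℝ) := by
    rw [Angle.coe_add, coe_ccwAngle, coe_ccwAngle, coe_ccwAngle, o.oangle_add hx hy hz]
  obtain ⟨hxy₀, hxy₂⟩ := o.ccwAngle_mem_Ico x y
  obtain ⟨hyz₀, hyz₂⟩ := o.ccwAngle_mem_Ico y z
  rcases lt_or_ge (o.ccwAngle x y + o.ccwAngle y z) (2 * π) with hlt | hge
  · exact Or.inl (hinj (o.ccwAngle_mem_Ico x z) ⟨by linarith, hlt⟩ hcoe)
  · refine Or.inr (hinj (o.ccwAngle_mem_Ico x z) ⟨by linarith, by linarith⟩ ?_)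
    rw [hcoe, Angle.coe_sub, Angle.coe_two_pi, sub_zero]

def IsCCWSuccessor (S : Set E) (x y : E) : Prop :=
  0 < ω x y ∧ ∀ z ∈ S, ¬(0 < ω x z ∧ 0 < ω z y)

variable {o}

lemma IsCCWSuccessor.eq {S : Set E} {x y y' : E} (h : o.IsCCWSuccessor S x y)
    (h' : o.IsCCWSuccessor S x y') (hy : y ∈ S) (hy' : y' ∈ S) (hyn : ‖y‖ = 1)
    (hy'n : ‖y'‖ = 1) : y = y' := by
  have h₁ : ω y' y ≤ 0 := le_of_not_gt fun hpos => h.2 y' hy' ⟨h'.1, hpos⟩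
  have h₂ : ω y y' ≤ 0 := le_of_not_gt fun hpos => h'.2 y hy ⟨h.1, hpos⟩
  rw [o.areaForm_swap] at h₂
  rcases o.eq_or_eq_neg_of_areaForm_eq_zero hyn hy'n (by linarith [o.areaForm_swap y y'])
    with rfl | rfl
  · rfl
  · have := h'.1
    rw [map_neg, neg_pos] at this
    exact absurd h.1 this.not_gt

lemma IsCCWSuccessor.ccwAngle_lt {S : Set E} {x y z : E} (h : o.IsCCWSuccessor S x y)
    (hz : z ∈ S) (hx : ‖x‖ = 1) (hy : ‖y‖ = 1) (hzn : ‖z‖ = 1) (hxz : x ≠ z) (hyz : y ≠ z) :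
    o.ccwAngle y z < o.ccwAngle x z := by
  have ne_zero : ∀ {w : E}, ‖w‖ = 1 → w ≠ 0 := fun hw => norm_ne_zero_iff.1 (by simp [hw])
  obtain ⟨hxy₀, hxyπ⟩ := (o.areaForm_pos_iff hx hy).1 h.1
  have hxz₀ := o.ccwAngle_pos hx hzn hxz
  have hyz₀ := o.ccwAngle_pos hy hzn hyz
  have hyz₂ := (o.ccwAngle_mem_Ico y z).2
  rcases o.ccwAngle_eq_add_or_eq_add_sub_two_pi (ne_zero hx) (ne_zero hy) (ne_zero hzn)
    with hsum | hwrap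
  · linarith
  -- in the remaining case `z` lies strictly between `x` and `y`
  have hzy₂ := (o.ccwAngle_mem_Ico z y).2
  have hzy : o.ccwAngle z y = o.ccwAngle x y - o.ccwAngle x z := by
    rcases o.ccwAngle_eq_add_or_eq_add_sub_two_pi (ne_zero hx) (ne_zero hzn) (ne_zero hy)
      with h' | h' <;> linarith
  exact absurd ⟨(o.areaForm_pos_iff hx hzn).2 ⟨hxz₀, by linarith⟩,
    (o.areaForm_pos_iff hzn hy).2 ⟨by linarith, by linarith⟩⟩ (h.2 z hz)

lemma apply_eq_of_forall_exists_isCCWSuccessor {V : Type*} {S : Set E} (hS : S.Finite)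
    (hunit : ∀ x ∈ S, ‖x‖ = 1) {f : E → V}
    (hf : ∀ x ∈ S, ∃ y ∈ S, o.IsCCWSuccessor S x y ∧ f y = f x) :
    ∀ x ∈ S, ∀ z ∈ S, f z = f x := by
  intro x hx z hz
  by_contra hne
  obtain ⟨m, ⟨hmS, hmx⟩, hmin⟩ := exists_min_image {m ∈ S | f m = f x}
    (fun m => o.ccwAngle m z) (hS.subset (sep_subset _ _)) ⟨x, hx, rfl⟩
  obtain ⟨y, hyS, hsucc, hym⟩ := hf m hmS
  have hne' : ∀ w, f w = f x → w ≠ z := fun w hw hwz => hne (hwz ▸ hw)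
  exact (hmin y ⟨hyS, hym.trans hmx⟩).not_gt <| hsucc.ccwAngle_lt hz (hunit m hmS)
    (hunit y hyS) (hunit z hz) (hne' m hmx) (hne' y (hym.trans hmx))

namespace IsPolygon

variable {B S : Set E} {a : E → E} {ℓ : E → ℝ} (hP : o.IsPolygon B S a ℓ)
include hP

lemma start_add_smul_mem {u : E} (hu : u ∈ S) {r : ℝ} (hr : r ∈ Icc 0 (ℓ u)) :
    a u + r • J u ∈ supportFace B u :=
  hP.supportFace_eq u hu ▸ mem_image_of_mem _ hr

lemma supportValue_eq {u : E} (hu : u ∈ S) : supportValue B u = ⟪a u, u⟫ := by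
  simpa using (hP.start_add_smul_mem hu ⟨le_rfl, (hP.length_pos u hu).le⟩).2.symm

lemma mem_of_forall_inner_le {x : E} (hx : ∀ w ∈ S, ⟪x, w⟫ ≤ supportValue B w) : x ∈ B :=
  mem_of_forall_inner_le_supportValue hP.isCompact hP.interior_nonempty.some_mem
    (fun w hw => norm_ne_zero_iff.1 (by simp [hP.norm_eq_one w hw])) hP.frontier_subset hx

lemma sub_mul_areaForm_nonpos {u w : E} (hu : u ∈ S) {r s : ℝ} (hr : r ∈ Icc 0 (ℓ u))
    (hx : a u + s • J u ∈ supportFace B w) : (r - s) * ω u w ≤ 0 := by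
  have := inner_le_supportValue (u := w) hP.isCompact (hP.start_add_smul_mem hu hr).1
  rw [← hx.2] at this
  simp only [inner_add_left, real_inner_smul_left, inner_rightAngleRotation_left] at this
  rw [sub_mul]
  linarith

lemma eq_start_of_mem_supportFace {u w x : E} (hw : w ∈ S) (hxu : x ∈ supportFace B u)
    (hxw : x ∈ supportFace B w) (hω : 0 < ω u w) : x = a w := by
  rw [hP.supportFace_eq w hw] at hxw
  obtain ⟨s, hs, rfl⟩ := hxw
  have := hP.sub_mul_areaForm_nonpos hw ⟨le_rfl, (hP.length_pos w hw).le⟩ hxu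
  rw [o.areaForm_swap] at this
  obtain rfl : s = 0 := le_antisymm (by nlinarith) hs.1
  simp

lemma start_notMem_supportFace {u w : E} (hu : u ∈ S) (hω : 0 < ω u w) :
    a u ∉ supportFace B w := fun h => by
  have := hP.sub_mul_areaForm_nonpos hu ⟨(hP.length_pos u hu).le, le_rfl⟩ (s := 0) (by simpa)
  nlinarith [hP.length_pos u hu]

lemma exists_end_mem_supportFace {u : E} (hu : u ∈ S) :
    ∃ w ∈ S, a u + ℓ u • J u ∈ supportFace B w ∧ 0 < ω u w := by
  set b := a u + ℓ u • J u
  have hbu : b ∈ supportFace B u := hP.start_add_smul_mem hu ⟨(hP.length_pos u hu).le, le_rfl⟩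
  by_contra! hnone
  -- otherwise `B` would contain points beyond `b` on the line of the edge
  have hev : ∀ w ∈ S, ∀ᶠ t in 𝓝[>] (0 : ℝ), ⟪b + t • J u, w⟫ ≤ supportValue B w := by
    intro w hw
    by_cases hbw : b ∈ supportFace B w
    · filter_upwards [self_mem_nhdsWithin] with t ht
      have := hnone w hw hbw
      rw [inner_add_left, real_inner_smul_left, inner_rightAngleRotation_left, hbw.2]
      nlinarith [mem_Ioi.1 ht]
    · have hlt : ⟪b, w⟫ < supportValue B w :=
        (inner_le_supportValue hP.isCompact hbu.1).lt_of_ne fun h => hbw ⟨hbu.1, h⟩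
      have hcont : Continuous fun t : ℝ => ⟪b + t • J u, w⟫ := by fun_prop
      exact (hcont.tendsto' 0 _ (by simp) |>.eventually (gt_mem_nhds hlt)).filter_mono
        nhdsWithin_le_nhds |>.mono fun _ => le_of_lt
  obtain ⟨t, ht, htpos⟩ :=
    (((eventually_all_finite hP.finite).2 hev).and self_mem_nhdsWithin).exists
  have hface : b + t • J u ∈ supportFace B u := ⟨hP.mem_of_forall_inner_le ht, by
    rw [inner_add_left, real_inner_smul_left, inner_rightAngleRotation_left, areaForm_apply_self,
      mul_zero, add_zero, hbu.2]⟩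
  rw [hP.supportFace_eq u hu] at hface
  obtain ⟨r, hr, hreq⟩ := hface
  have hJu : J u ≠ 0 := by simp [← norm_ne_zero_iff, hP.norm_eq_one u hu]
  have : r = ℓ u + t := smul_left_injective ℝ hJu <| by
    show r • J u = (ℓ u + t) • J u
    rw [add_smul, ← add_right_inj (a u)]
    simpa [b, add_assoc] using hreq
  linarith [hr.2, htpos]

lemma exists_isCCWSuccessor {u : E} (hu : u ∈ S) :
    ∃ w ∈ S, o.IsCCWSuccessor S u w ∧ a w = a u + ℓ u • J u := by
  obtain ⟨w, hw, hbw, hω⟩ := hP.exists_end_mem_supportFace hu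
  set b := a u + ℓ u • J u
  have hbu : b ∈ supportFace B u := hP.start_add_smul_mem hu ⟨(hP.length_pos u hu).le, le_rfl⟩
  refine ⟨w, hw, ⟨hω, fun z hz ⟨huz, hzw⟩ => ?_⟩,
    (hP.eq_start_of_mem_supportFace hw hbu hbw hω).symm⟩
  -- `z` is a positive combination of `u` and `w`, so `b` also maximizes `⟪·, z⟫` on `B`
  have hbz : b ∈ supportFace B z := mem_supportFace_of_forall_inner_le hbu.1 fun y hy => by
    have key := congrArg (fun v => ⟪y - b, v⟫)
      (o.areaForm_smul_eq_add (hP.norm_eq_one u hu) w z)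
    simp only [inner_add_right, real_inner_smul_right, inner_sub_left] at key
    have hyu := inner_le_supportValue hP.isCompact hy (u := u)
    have hyw := inner_le_supportValue hP.isCompact hy (u := w)
    rw [← hbu.2] at hyu
    rw [← hbw.2] at hyw
    nlinarith [mul_nonneg hzw.le (sub_nonneg.2 hyu), mul_nonneg huz.le (sub_nonneg.2 hyw)]
  exact hP.start_notMem_supportFace hz hzw (hP.eq_start_of_mem_supportFace hz hbu hbz huz ▸ hbw)

end IsPolygon

variable {P Q S : Set E} {aP aQ : E → E} {ℓ ℓ' : E → ℝ}

lemma IsPolygon.exists_start_eq_add (hP : o.IsPolygon P S aP ℓ) (hQ : o.IsPolygon Q S aQ ℓ) :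
    ∃ v, ∀ w ∈ S, aQ w = aP w + v := by
  rcases S.eq_empty_or_nonempty with rfl | ⟨w₀, hw₀⟩
  · exact ⟨0, by simp⟩
  have hconst := o.apply_eq_of_forall_exists_isCCWSuccessor hP.finite hP.norm_eq_one
    (f := fun w => aQ w - aP w) fun x hx => by
      obtain ⟨y, hy, hsucc, hPy⟩ := hP.exists_isCCWSuccessor hx
      obtain ⟨y', hy', hsucc', hQy'⟩ := hQ.exists_isCCWSuccessor hx
      obtain rfl := hsucc.eq hsucc' hy hy' (hP.norm_eq_one y hy) (hP.norm_eq_one y' hy')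
      exact ⟨y, hy, hsucc, by simp only [hPy, hQy', add_sub_add_right_eq_sub]⟩
  exact ⟨aQ w₀ - aP w₀, fun w hw => eq_add_of_sub_eq' (hconst w₀ hw₀ w hw)⟩

lemma IsPolygon.eq_image_add (hP : o.IsPolygon P S aP ℓ) (hQ : o.IsPolygon Q S aQ ℓ') {v : E}
    (h : ∀ w ∈ S, aQ w = aP w + v) : Q = (fun x => x + v) '' P := by
  have hsupp : ∀ w ∈ S, supportValue Q w = supportValue P w + ⟪v, w⟫ := fun w hw => by
    rw [hQ.supportValue_eq hw, hP.supportValue_eq hw, h w hw, inner_add_left]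
  ext x
  refine ⟨fun hx => ⟨x - v, hP.mem_of_forall_inner_le fun w hw => ?_, sub_add_cancel x v⟩, ?_⟩
  · linarith [inner_sub_left (𝕜 := ℝ) x v w, inner_le_supportValue hQ.isCompact hx (u := w),
      hsupp w hw]
  · rintro ⟨y, hy, rfl⟩
    refine hQ.mem_of_forall_inner_le fun w hw => ?_
    linarith [inner_add_left (𝕜 := ℝ) y v w, inner_le_supportValue hP.isCompact hy (u := w),
      hsupp w hw]

end Orientation

end OrientedPlane

theorem stmt_13_general {d : ℕ} (u : Fin d → EuclideanSpace ℝ (Fin 2)) (ν : Fin d → ℝ)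
    (hu : ∀ i, ‖u i‖ = 1)
    (hν : ∀ i, 0 < ν i)
    (P Q : Set (EuclideanSpace ℝ (Fin 2)))
    (hPconv : Convex ℝ P) (hPcomp : IsCompact P) (hPint : (interior P).Nonempty)
    (hQconv : Convex ℝ Q) (hQcomp : IsCompact Q) (hQint : (interior Q).Nonempty)
    (facP facQ : Fin d → Set (EuclideanSpace ℝ (Fin 2)))
    (hfacP : ∀ i, facP i = {x ∈ P | ⟪x, u i⟫ = sSup ((fun y => ⟪y, u i⟫) '' P)})
    (hfacQ : ∀ i, facQ i = {x ∈ Q | ⟪x, u i⟫ = sSup ((fun y => ⟪y, u i⟫) '' Q)})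
    (hPbd : frontier P = ⋃ i, facP i) (hQbd : frontier Q = ⋃ i, facQ i)
    (hPlen : ∀ i, (μH[1] : Measure (EuclideanSpace ℝ (Fin 2))) (facP i) = ENNReal.ofReal (ν i))
    (hQlen : ∀ i, (μH[1] : Measure (EuclideanSpace ℝ (Fin 2))) (facQ i) = ENNReal.ofReal (ν i)) :
    ∃ v, Q = (fun x => x + v) '' P := by
  have : Fact (Module.finrank ℝ (EuclideanSpace ℝ (Fin 2)) = 2) := ⟨finrank_euclideanSpace_fin⟩
  let o : Orientation ℝ (EuclideanSpace ℝ (Fin 2)) (Fin 2) :=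
    (EuclideanSpace.basisFun (Fin 2) ℝ).toBasis.orientation
  obtain rfl : facP = fun i => supportFace P (u i) := funext hfacP
  obtain rfl : facQ = fun i => supportFace Q (u i) := funext hfacQ
  set ℓ := fun w => (μH[1] (supportFace P w)).toReal
  have hℓ : ∀ i, ℓ (u i) = ν i := fun i => by simp [ℓ, hPlen i, (hν i).le]
  obtain ⟨aP, hPpoly⟩ := o.exists_isPolygon (ℓ := ℓ) hPcomp hPconv hPint (finite_range u)
    (forall_mem_range.2 hu) (by rw [biUnion_range]; exact hPbd.le)
    (forall_mem_range.2 fun i => by rw [hPlen, hℓ]) (forall_mem_range.2 fun i => hℓ i ▸ hν i)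
  obtain ⟨aQ, hQpoly⟩ := o.exists_isPolygon (ℓ := ℓ) hQcomp hQconv hQint (finite_range u)
    (forall_mem_range.2 hu) (by rw [biUnion_range]; exact hQbd.le)
    (forall_mem_range.2 fun i => by rw [hQlen, hℓ]) (forall_mem_range.2 fun i => hℓ i ▸ hν i)
  obtain ⟨v, hv⟩ := hPpoly.exists_start_eq_add hQpoly
  exact ⟨v, hPpoly.eq_image_add hQpoly hv⟩

/-- Minkowski uniqueness in dimension 2: a convex polygon is determined up to
translation by its outward unit edge normals and edge lengths. -/
theorem stmt_13 {d : ℕ} (u : Fin d → EuclideanSpace ℝ (Fin 2)) (ν : Fin d → ℝ)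
    (hu : ∀ i, ‖u i‖ = 1) (hspan : Submodule.span ℝ (Set.range u) = ⊤)
    (hν : ∀ i, 0 < ν i) (hmink : ∑ i, ν i • u i = 0)
    (P Q : Set (EuclideanSpace ℝ (Fin 2)))
    (hPconv : Convex ℝ P) (hPcomp : IsCompact P) (hPint : (interior P).Nonempty)
    (hQconv : Convex ℝ Q) (hQcomp : IsCompact Q) (hQint : (interior Q).Nonempty)
    (facP facQ : Fin d → Set (EuclideanSpace ℝ (Fin 2)))
    (hfacP : ∀ i, facP i = {x ∈ P | ⟪x, u i⟫ = sSup ((fun y => ⟪y, u i⟫) '' P)})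
    (hfacQ : ∀ i, facQ i = {x ∈ Q | ⟪x, u i⟫ = sSup ((fun y => ⟪y, u i⟫) '' Q)})
    (hPbd : frontier P = ⋃ i, facP i) (hQbd : frontier Q = ⋃ i, facQ i)
    (hPlen : ∀ i, (μH[1] : Measure (EuclideanSpace ℝ (Fin 2))) (facP i) = ENNReal.ofReal (ν i))
    (hQlen : ∀ i, (μH[1] : Measure (EuclideanSpace ℝ (Fin 2))) (facQ i) = ENNReal.ofReal (ν i)) :
    ∃ v, Q = (fun x => x + v) '' P :=
  stmt_13_general u ν hu hν P Q hPconv hPcomp hPint hQconv hQcomp hQint facP facQ hfacP hfacQ hPbd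
    hQbd hPlen hQlen
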